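/- arXiv:2011.12196 — 5 statements merged into one kernel-verified Lean document; each statement's English description precedes it below -/
import Mathlib

section
/- Let (Ω, P) be a probability space and let 𝒞 be a finite set of events. For each C ∈ 𝒞, let Γ(C) ⊆ 𝒞 \ {C} be a set of events such that C is mutually independent of the events outside {C} ∪ Γ(C), in the sense that for every subset S ⊆ 𝒞 \ ({C} ∪ Γ(C)) one has P[C ∩ ⋂_{D∈S} Dᶜ] = P[C] · P[⋂_{D∈S} Dᶜ]. Suppose there exists a function x : 𝒞 → (0,1) such that P[C] ≤ x(C) · ∏_{D ∈ Γ(C)} (1 − x(D)) for all C ∈ 𝒞. Then P[⋂_{C∈𝒞} Cᶜ] ≥ ∏_{C∈𝒞} (1 − x(C)) > 0. -/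
open MeasureTheory Finset

/-- **General Lovász Local Lemma.**
Let `(Ω, P)` be a probability space and let `𝒞 = {A i : i ∈ ι}` be a finite family of events.
For each `i`, let `Γ i` be a set of indices (not containing `i`) such that `A i` is mutually
independent of the events outside `{A i} ∪ Γ i`, in the sense that for every subset `S` of
indices avoiding `{i} ∪ Γ i` one has `P[A i ∩ ⋂_{j ∈ S} (A j)ᶜ] = P[A i] · P[⋂_{j ∈ S} (A j)ᶜ]`.
If there is `x : ι → (0,1)` with `P[A i] ≤ x i · ∏_{j ∈ Γ i} (1 - x j)` for all `i`, then
`P[⋂ i, (A i)ᶜ] ≥ ∏ i, (1 - x i) > 0`. -/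
theorem general_lovasz_local_lemma
    {Ω : Type*} [MeasurableSpace Ω] (P : Measure Ω) [IsProbabilityMeasure P]
    {ι : Type*} [Fintype ι] [DecidableEq ι]
    (A : ι → Set Ω) (hA : ∀ i, MeasurableSet (A i))
    (Γ : ι → Finset ι) (hΓ : ∀ i, i ∉ Γ i)
    (hind : ∀ i, ∀ S : Finset ι, (∀ j ∈ S, j ≠ i ∧ j ∉ Γ i) →
      P (A i ∩ ⋂ j ∈ S, (A j)ᶜ) = P (A i) * P (⋂ j ∈ S, (A j)ᶜ))
    (x : ι → ℝ) (hx : ∀ i, x i ∈ Set.Ioo (0 : ℝ) 1)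
    (hcond : ∀ i, (P (A i)).toReal ≤ x i * ∏ j ∈ Γ i, (1 - x j)) :
    ∏ i, (1 - x i) ≤ (P (⋂ i, (A i)ᶜ)).toReal ∧ 0 < ∏ i, (1 - x i) := by
  have hx0 : ∀ i, 0 < x i := fun i => (hx i).1
  have hx1 : ∀ i, x i < 1 := fun i => (hx i).2
  have h1x : ∀ i, 0 < 1 - x i := fun i => by linarith [hx1 i]
  set N : Finset ι → Set Ω := fun S => ⋂ j ∈ S, (A j)ᶜ with hN
  have hsplit : ∀ (S : Finset ι) (j : ι),
      (P (N S)).toReal = (P (A j ∩ N S)).toReal + (P ((A j)ᶜ ∩ N S)).toReal := by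
    intro S j
    have h := measure_inter_add_diff (μ := P) (N S) (hA j)
    rw [Set.inter_comm, Set.diff_eq, Set.inter_comm (N S)] at h
    rw [← h, ENNReal.toReal_add (measure_ne_top P _) (measure_ne_top P _)]
  have hinsert : ∀ (S : Finset ι) (j : ι), N (insert j S) = (A j)ᶜ ∩ N S := by
    intro S j; simp [hN]
  have hprodpos : ∀ T : Finset ι, 0 < ∏ j ∈ T, (1 - x j) :=
    fun T => Finset.prod_pos fun j _ => h1x j
  have key : ∀ n : ℕ, ∀ S : Finset ι, S.card ≤ n → ∀ i, i ∉ S →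
      (P (A i ∩ N S)).toReal ≤ x i * (P (N S)).toReal := by
    intro n
    induction n using Nat.strong_induction_on with
    | _ n IH =>
      intro S hScard i hiS
      set S₁ := S ∩ Γ i with hS₁
      set S₂ := S \ Γ i with hS₂
      have hS₂sub : S₂ ⊆ S := Finset.sdiff_subset
      have peel : ∀ T : Finset ι, T ⊆ S₁ →
          (∏ j ∈ T, (1 - x j)) * (P (N S₂)).toReal ≤ (P (N (T ∪ S₂))).toReal := by
        intro T
        induction T using Finset.induction_on with
        | empty => intro _; simp
        | @insert j T hjT ihT =>
          intro hsub
          have hjS₁ : j ∈ S₁ := hsub (Finset.mem_insert_self j T)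
          have hTsub : T ⊆ S₁ := (Finset.insert_subset_iff.mp hsub).2
          have hjΓ : j ∈ Γ i := (Finset.mem_inter.mp hjS₁).2
          have hjS : j ∈ S := (Finset.mem_inter.mp hjS₁).1
          have hjS₂ : j ∉ S₂ := by simp [hS₂, hjΓ]
          have hjTS₂ : j ∉ T ∪ S₂ := by simp [hjT, hjS₂]
          have hsubS : T ∪ S₂ ⊆ S.erase j := by
            intro k hk
            rw [Finset.mem_erase]
            refine ⟨fun h => hjTS₂ (h ▸ hk), ?_⟩
            rcases Finset.mem_union.mp hk with h | h
            · exact (Finset.mem_inter.mp (hTsub h)).1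
            · exact hS₂sub h
          have hcard : (T ∪ S₂).card < n := by
            calc (T ∪ S₂).card ≤ (S.erase j).card := Finset.card_le_card hsubS
              _ = S.card - 1 := Finset.card_erase_of_mem hjS
              _ < S.card := Nat.sub_lt (Finset.card_pos.mpr ⟨j, hjS⟩) one_pos
              _ ≤ n := hScard
          have hIH := IH (T ∪ S₂).card hcard (T ∪ S₂) le_rfl j hjTS₂
          have hpeelT := ihT hTsub
          have e1 : (P (N (insert j T ∪ S₂))).toReal =
              (P (N (T ∪ S₂))).toReal - (P (A j ∩ N (T ∪ S₂))).toReal := by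
            rw [Finset.insert_union, hinsert (T ∪ S₂) j]
            linarith [hsplit (T ∪ S₂) j]
          rw [e1, Finset.prod_insert hjT]
          have h2 := mul_le_mul_of_nonneg_left hpeelT (h1x j).le
          nlinarith [hIH]
      have hS₁sub : S₁ ⊆ Γ i := Finset.inter_subset_right
      have hSeq : S₁ ∪ S₂ = S := by
        ext k
        simp only [hS₁, hS₂, Finset.mem_union, Finset.mem_inter, Finset.mem_sdiff]
        tauto
      have hNsub : N S ⊆ N S₂ := by
        intro ω hω
        simp only [hN, Set.mem_iInter] at *
        exact fun j hj => hω j (hS₂sub hj)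
      have hmono : (P (A i ∩ N S)).toReal ≤ (P (A i ∩ N S₂)).toReal :=
        ENNReal.toReal_mono (measure_ne_top P _)
          (measure_mono (Set.inter_subset_inter_right _ hNsub))
      have hindS₂ : ∀ j ∈ S₂, j ≠ i ∧ j ∉ Γ i := by
        intro j hj
        rcases Finset.mem_sdiff.mp hj with ⟨hjS, hjΓ⟩
        exact ⟨fun h => hiS (h ▸ hjS), hjΓ⟩
      have heq : (P (A i ∩ N S₂)).toReal = (P (A i)).toReal * (P (N S₂)).toReal := by
        simp only [hN]
        rw [hind i S₂ hindS₂, ENNReal.toReal_mul]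
      have hΓS₁ : ∏ j ∈ Γ i, (1 - x j) ≤ ∏ j ∈ S₁, (1 - x j) := by
        rw [← Finset.prod_sdiff hS₁sub]
        have h1 : ∏ j ∈ Γ i \ S₁, (1 - x j) ≤ 1 :=
          Finset.prod_le_one (fun j _ => (h1x j).le) (fun j _ => by linarith [hx0 j])
        nlinarith [hprodpos S₁]
      have hpe := peel S₁ (Finset.Subset.refl S₁)
      rw [hSeq] at hpe
      have hg2 : (0 : ℝ) ≤ (P (N S₂)).toReal := ENNReal.toReal_nonneg
      calc (P (A i ∩ N S)).toReal ≤ (P (A i ∩ N S₂)).toReal := hmono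
        _ = (P (A i)).toReal * (P (N S₂)).toReal := heq
        _ ≤ (x i * ∏ j ∈ Γ i, (1 - x j)) * (P (N S₂)).toReal :=
            mul_le_mul_of_nonneg_right (hcond i) hg2
        _ ≤ (x i * ∏ j ∈ S₁, (1 - x j)) * (P (N S₂)).toReal :=
            mul_le_mul_of_nonneg_right
              (mul_le_mul_of_nonneg_left hΓS₁ (hx0 i).le) hg2
        _ = x i * ((∏ j ∈ S₁, (1 - x j)) * (P (N S₂)).toReal) := by ring
        _ ≤ x i * (P (N S)).toReal := mul_le_mul_of_nonneg_left hpe (hx0 i).le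
  have R : ∀ S : Finset ι, ∏ j ∈ S, (1 - x j) ≤ (P (N S)).toReal := by
    intro S
    induction S using Finset.induction_on with
    | empty => simp [hN]
    | @insert j S hjS ih =>
      have hk := key S.card S le_rfl j hjS
      have e1 : (P (N (insert j S))).toReal =
          (P (N S)).toReal - (P (A j ∩ N S)).toReal := by
        rw [hinsert S j]
        linarith [hsplit S j]
      rw [e1, Finset.prod_insert hjS]
      have h2 := mul_le_mul_of_nonneg_left ih (h1x j).le
      nlinarith [hk]
  have hU : (⋂ i, (A i)ᶜ) = N Finset.univ := by simp [hN]
  constructor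
  · rw [hU]; exact R Finset.univ
  · exact Finset.prod_pos fun i _ => h1x i
end

section
/- Let (Ω, P), 𝒞, Γ(·) and x : 𝒞 → (0,1) satisfy the hypotheses of the general Lovász Local Lemma: for each C ∈ 𝒞 and every subset S ⊆ 𝒞 \ ({C} ∪ Γ(C)), P[C ∩ ⋂_{D∈S} Dᶜ] = P[C]·P[⋂_{D∈S} Dᶜ], and P[C] ≤ x(C)·∏_{D∈Γ(C)}(1 − x(D)) for all C ∈ 𝒞 (so that P[⋂_{C∈𝒞} Cᶜ] > 0 and the conditional measure μ_S[·] := P[· | ⋂_{C∈𝒞} Cᶜ] is well-defined). Let B be any event and let Γ(B) ⊆ 𝒞 be a set such that for every subset S ⊆ 𝒞 \ Γ(B), P[B ∩ ⋂_{D∈S} Dᶜ] = P[B]·P[⋂_{D∈S} Dᶜ]. Then μ_S[B] ≤ P[B] · ∏_{C∈Γ(B)} (1 − x(C))^{−1}. -/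
/-!
Write `E S = ⋂ j ∈ S, (A j)ᶜ`. The core is the conditional bound `P[A i ∩ E S] ≤ x i · P[E S]`,
proved by strong induction on `S`: with `S₂ = S \ Γ i`, whose events are independent of `A i`,
and `S₁ = S ∩ Γ i`, adding the events of `S₁` back to `S₂` one at a time costs at most a factor
`1 - x k` each time by the inductive hypothesis, so `∏_{S₁} (1 - x k) · P[E S₂] ≤ P[E S]`, and
the LLL condition absorbs this product.

The same peeling with `S₁ = ΓB` gives `∏_{ΓB} (1 - x j) · P[E ΓBᶜ] ≤ P[E univ]`, while the
independence of `B` gives `P[B ∩ E univ] ≤ P[B] · P[E ΓBᶜ]`.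
-/

open MeasureTheory Finset

section Peeling

variable {Ω ι : Type*} [MeasurableSpace Ω] (μ : Measure Ω) [IsFiniteMeasure μ] {A : ι → Set Ω}

lemma one_sub_mul_le_measureReal_biInter_compl_insert [DecidableEq ι] {k : ι}
    (hk : MeasurableSet (A k)) {U : Finset ι} {c : ℝ}
    (h : μ.real (A k ∩ ⋂ j ∈ U, (A j)ᶜ) ≤ c * μ.real (⋂ j ∈ U, (A j)ᶜ)) :
    (1 - c) * μ.real (⋂ j ∈ U, (A j)ᶜ) ≤ μ.real (⋂ j ∈ insert k U, (A j)ᶜ) := by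
  have hsplit := measureReal_inter_add_sdiff (μ := μ) (s := ⋂ j ∈ U, (A j)ᶜ) hk
  rw [set_biInter_insert, Set.inter_comm, ← Set.sdiff_eq]
  rw [Set.inter_comm] at h
  linarith

lemma prod_one_sub_mul_le_measureReal_biInter_compl [DecidableEq ι]
    (hA : ∀ i, MeasurableSet (A i)) {x : ι → ℝ} {T U : Finset ι} (hTU : Disjoint T U)
    (hx : ∀ k ∈ T, x k ≤ 1)
    (hbound : ∀ k ∈ T, ∀ V ⊆ U ∪ T, k ∉ V →
      μ.real (A k ∩ ⋂ j ∈ V, (A j)ᶜ) ≤ x k * μ.real (⋂ j ∈ V, (A j)ᶜ)) :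
    (∏ k ∈ T, (1 - x k)) * μ.real (⋂ j ∈ U, (A j)ᶜ) ≤ μ.real (⋂ j ∈ U ∪ T, (A j)ᶜ) := by
  induction T using Finset.induction_on with
  | empty => simp
  | @insert k T hkT ih =>
    have hkU : k ∉ U := disjoint_left.mp hTU (mem_insert_self k T)
    have hT : μ.real (⋂ j ∈ U, (A j)ᶜ) * ∏ k ∈ T, (1 - x k) ≤ μ.real (⋂ j ∈ U ∪ T, (A j)ᶜ) := by
      rw [mul_comm]
      refine ih (disjoint_of_subset_left (subset_insert k T) hTU)
        (fun j hj ↦ hx j (mem_insert_of_mem hj)) fun j hj V hV hjV ↦ ?_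
      exact hbound j (mem_insert_of_mem hj) V (hV.trans (union_subset_union_right
        (subset_insert k T))) hjV
    have hk : (1 - x k) * μ.real (⋂ j ∈ U ∪ T, (A j)ᶜ) ≤ μ.real (⋂ j ∈ insert k (U ∪ T), (A j)ᶜ) :=
      one_sub_mul_le_measureReal_biInter_compl_insert μ (hA k) <|
        hbound k (mem_insert_self k T) _ (union_subset_union_right (subset_insert k T))
          (by simp [hkU, hkT])
    rw [union_insert, prod_insert hkT]
    calc (1 - x k) * (∏ k ∈ T, (1 - x k)) * μ.real (⋂ j ∈ U, (A j)ᶜ)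
        = (1 - x k) * (μ.real (⋂ j ∈ U, (A j)ᶜ) * ∏ k ∈ T, (1 - x k)) := by ring
      _ ≤ (1 - x k) * μ.real (⋂ j ∈ U ∪ T, (A j)ᶜ) :=
        mul_le_mul_of_nonneg_left hT (sub_nonneg.mpr (hx k (mem_insert_self k T)))
      _ ≤ _ := hk

end Peeling

section LovaszLocalLemma

variable {Ω ι : Type*} [MeasurableSpace Ω] (P : Measure Ω) [IsFiniteMeasure P]
  {A : ι → Set Ω} {Γ : ι → Finset ι} {x : ι → ℝ}

theorem measureReal_inter_biInter_compl_le [DecidableEq ι] (hA : ∀ i, MeasurableSet (A i))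
    (hind : ∀ i, ∀ S : Finset ι, (∀ j ∈ S, j ≠ i ∧ j ∉ Γ i) →
      P (A i ∩ ⋂ j ∈ S, (A j)ᶜ) = P (A i) * P (⋂ j ∈ S, (A j)ᶜ))
    (hx : ∀ i, x i ∈ Set.Icc (0 : ℝ) 1)
    (hcond : ∀ i, P.real (A i) ≤ x i * ∏ j ∈ Γ i, (1 - x j)) (S : Finset ι) (i : ι) :
    P.real (A i ∩ ⋂ j ∈ S, (A j)ᶜ) ≤ x i * P.real (⋂ j ∈ S, (A j)ᶜ) := by
  induction S using Finset.strongInduction generalizing i with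
  | H S ih =>
    by_cases hiS : i ∈ S
    · have hempty : A i ∩ ⋂ j ∈ S, (A j)ᶜ = ∅ :=
        Set.eq_empty_of_forall_notMem fun ω hω ↦ Set.mem_iInter₂.mp hω.2 i hiS hω.1
      rw [hempty, measureReal_empty]
      exact mul_nonneg (hx i).1 measureReal_nonneg
    set S₂ := S \ Γ i
    set S₁ := S ∩ Γ i
    have hS : S₂ ∪ S₁ = S := sdiff_union_inter S (Γ i)
    have hindep : P.real (A i ∩ ⋂ j ∈ S₂, (A j)ᶜ) = P.real (A i) * P.real (⋂ j ∈ S₂, (A j)ᶜ) := by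
      refine (congrArg ENNReal.toReal (hind i S₂ fun j hj ↦ ?_)).trans ENNReal.toReal_mul
      obtain ⟨hjS, hjΓ⟩ := mem_sdiff.mp hj
      exact ⟨ne_of_mem_of_not_mem hjS hiS, hjΓ⟩
    have hpeel : (∏ j ∈ S₁, (1 - x j)) * P.real (⋂ j ∈ S₂, (A j)ᶜ) ≤ P.real (⋂ j ∈ S, (A j)ᶜ) := by
      rw [← hS]
      refine prod_one_sub_mul_le_measureReal_biInter_compl P hA (disjoint_sdiff_inter S (Γ i)).symm
        (fun k _ ↦ (hx k).2) fun k hk V hV hkV ↦ ih V ?_ k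
      rw [hS] at hV
      exact ssubset_of_subset_of_ne hV (by rintro rfl; exact hkV (mem_inter.mp hk).1)
    have hprod : ∏ j ∈ Γ i, (1 - x j) ≤ ∏ j ∈ S₁, (1 - x j) :=
      prod_le_prod_of_subset_of_le_one inter_subset_right (fun j _ ↦ sub_nonneg.mpr (hx j).2)
        fun j _ _ ↦ by linarith [(hx j).1]
    have hS₂ : 0 ≤ P.real (⋂ j ∈ S₂, (A j)ᶜ) := measureReal_nonneg
    calc P.real (A i ∩ ⋂ j ∈ S, (A j)ᶜ)
        ≤ P.real (A i ∩ ⋂ j ∈ S₂, (A j)ᶜ) :=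
          measureReal_mono (Set.inter_subset_inter_right _ (Set.biInter_subset_biInter_left
            (coe_subset.mpr sdiff_subset)))
      _ = P.real (A i) * P.real (⋂ j ∈ S₂, (A j)ᶜ) := hindep
      _ ≤ x i * (∏ j ∈ S₁, (1 - x j)) * P.real (⋂ j ∈ S₂, (A j)ᶜ) := by
          gcongr
          exact (hcond i).trans (mul_le_mul_of_nonneg_left hprod (hx i).1)
      _ ≤ x i * P.real (⋂ j ∈ S, (A j)ᶜ) := by
          rw [mul_assoc]
          exact mul_le_mul_of_nonneg_left hpeel (hx i).1

end LovaszLocalLemma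

theorem lll_distribution_comparison_general
    {Ω : Type*} [MeasurableSpace Ω] (P : Measure Ω) [IsProbabilityMeasure P]
    {ι : Type*} [Fintype ι]
    (A : ι → Set Ω) (hA : ∀ i, MeasurableSet (A i))
    (Γ : ι → Finset ι)
    (hind : ∀ i, ∀ S : Finset ι, (∀ j ∈ S, j ≠ i ∧ j ∉ Γ i) →
      P (A i ∩ ⋂ j ∈ S, (A j)ᶜ) = P (A i) * P (⋂ j ∈ S, (A j)ᶜ))
    (x : ι → ℝ) (hx : ∀ i, x i ∈ Set.Ioo (0 : ℝ) 1)
    (hcond : ∀ i, (P (A i)).toReal ≤ x i * ∏ j ∈ Γ i, (1 - x j))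
    (B : Set Ω) (ΓB : Finset ι)
    (hindB : ∀ S : Finset ι, (∀ j ∈ S, j ∉ ΓB) →
      P (B ∩ ⋂ j ∈ S, (A j)ᶜ) = P B * P (⋂ j ∈ S, (A j)ᶜ)) :
    (P (B ∩ ⋂ i, (A i)ᶜ)).toReal / (P (⋂ i, (A i)ᶜ)).toReal
      ≤ (P B).toReal * ∏ j ∈ ΓB, (1 - x j)⁻¹ := by
  classical
  set U := univ \ ΓB
  have hall : (⋂ i, (A i)ᶜ) = ⋂ j ∈ U ∪ ΓB, (A j)ᶜ := by simp [U]
  have hnum : P.real (B ∩ ⋂ i, (A i)ᶜ) ≤ P.real B * P.real (⋂ j ∈ U, (A j)ᶜ) :=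
    calc P.real (B ∩ ⋂ i, (A i)ᶜ) ≤ P.real (B ∩ ⋂ j ∈ U, (A j)ᶜ) :=
          measureReal_mono <| Set.inter_subset_inter_right _ <|
            Set.subset_iInter₂ fun j _ ↦ Set.iInter_subset _ j
      _ = P.real B * P.real (⋂ j ∈ U, (A j)ᶜ) :=
          (congrArg ENNReal.toReal (hindB U fun j hj ↦ (mem_sdiff.mp hj).2)).trans
            ENNReal.toReal_mul
  have hden : (∏ j ∈ ΓB, (1 - x j)) * P.real (⋂ j ∈ U, (A j)ᶜ) ≤ P.real (⋂ i, (A i)ᶜ) := by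
    rw [hall]
    exact prod_one_sub_mul_le_measureReal_biInter_compl P hA disjoint_sdiff
      (fun k _ ↦ (hx k).2.le)
      fun k _ V _ _ ↦ measureReal_inter_biInter_compl_le P hA hind
        (fun i ↦ Set.Ioo_subset_Icc_self (hx i)) hcond V k
  have hprod : 0 < ∏ j ∈ ΓB, (1 - x j) := prod_pos fun j _ ↦ sub_pos.mpr (hx j).2
  rw [prod_inv_distrib]
  refine div_le_of_le_mul₀ measureReal_nonneg
    (mul_nonneg measureReal_nonneg (inv_nonneg.mpr hprod.le)) ?_
  calc P.real (B ∩ ⋂ i, (A i)ᶜ) ≤ P.real B * P.real (⋂ j ∈ U, (A j)ᶜ) := hnum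
    _ = P.real B * (∏ j ∈ ΓB, (1 - x j))⁻¹ *
          ((∏ j ∈ ΓB, (1 - x j)) * P.real (⋂ j ∈ U, (A j)ᶜ)) := by
        field_simp
    _ ≤ P.real B * (∏ j ∈ ΓB, (1 - x j))⁻¹ * P.real (⋂ i, (A i)ᶜ) := by gcongr

/-- **Comparison of the LLL distribution with the underlying measure** (Haeupler–Saha–Srinivasan).
Under the hypotheses of the general Lovász Local Lemma for the events `A i` (so that the
conditional measure `μ_S[·] = P[· | ⋂ i, (A i)ᶜ]` is well-defined), if `B` is an event and
`ΓB` is a set of indices such that `B` is mutually independent of the events outside `ΓB`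
(in the sense of the product identity below), then
`μ_S[B] ≤ P[B] · ∏_{j ∈ ΓB} (1 - x j)⁻¹`. -/
theorem lll_distribution_comparison
    {Ω : Type*} [MeasurableSpace Ω] (P : Measure Ω) [IsProbabilityMeasure P]
    {ι : Type*} [Fintype ι] [DecidableEq ι]
    (A : ι → Set Ω) (hA : ∀ i, MeasurableSet (A i))
    (Γ : ι → Finset ι) (hΓ : ∀ i, i ∉ Γ i)
    (hind : ∀ i, ∀ S : Finset ι, (∀ j ∈ S, j ≠ i ∧ j ∉ Γ i) →
      P (A i ∩ ⋂ j ∈ S, (A j)ᶜ) = P (A i) * P (⋂ j ∈ S, (A j)ᶜ))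
    (x : ι → ℝ) (hx : ∀ i, x i ∈ Set.Ioo (0 : ℝ) 1)
    (hcond : ∀ i, (P (A i)).toReal ≤ x i * ∏ j ∈ Γ i, (1 - x j))
    (B : Set Ω) (hB : MeasurableSet B) (ΓB : Finset ι)
    (hindB : ∀ S : Finset ι, (∀ j ∈ S, j ∉ ΓB) →
      P (B ∩ ⋂ j ∈ S, (A j)ᶜ) = P B * P (⋂ j ∈ S, (A j)ᶜ)) :
    (P (B ∩ ⋂ i, (A i)ᶜ)).toReal / (P (⋂ i, (A i)ᶜ)).toReal
      ≤ (P B).toReal * ∏ j ∈ ΓB, (1 - x j)⁻¹ :=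
  lll_distribution_comparison_general P A hA Γ hind x hx hcond B ΓB hindB
end

section
/- Let G = (V, E) be a graph with maximum degree at most d and let v ∈ V. Then for every integer t ≥ 2, the number of {2,3}-trees in G of size t containing v is at most (e·d³)^{t−1}/2, where e is the base of the natural logarithm. -/
open Finset
open scoped Classical

/-- The auxiliary graph on the vertices of `G` joining two vertices exactly when their
geodesic distance in `G` is `2` or `3`. (Note that `SimpleGraph.dist` is `0` for
unreachable pairs, which are correctly excluded here since their geodesic distance is `∞`.) -/
def twoThreeGraph {V : Type*} (G : SimpleGraph V) : SimpleGraph V where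
  Adj u v := u ≠ v ∧ (G.dist u v = 2 ∨ G.dist u v = 3)
  symm := by
    constructor
    intro u v h
    exact ⟨h.1.symm, by rw [SimpleGraph.dist_comm]; exact h.2⟩
  loopless := by
    constructor
    intro u h
    exact h.1 rfl

/-- A `{2,3}`-tree in a graph `G` is a set `T` of vertices such that (i) any two distinct
vertices of `T` are at geodesic distance at least `2` (i.e. are non-adjacent), and (ii) the
graph on `T` joining pairs at distance `2` or `3` is connected. -/
def IsTwoThreeTree {V : Type*} (G : SimpleGraph V) (T : Finset V) : Prop :=
  (∀ u ∈ T, ∀ v ∈ T, u ≠ v → ¬ G.Adj u v) ∧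
    ((twoThreeGraph G).induce (T : Set V)).Connected

/-!
A `{2,3}`-tree containing `v` is a connected set containing `v` in `twoThreeGraph G`, whose
maximum degree is at most `d(d-1) + d(d-1)² ≤ d³`. In a graph of maximum degree `Δ`, a connected
`t`-set `T ∋ v` is explored from `v` as `u₀ = v, u₁, …, u_{t-1}`, each `u_{k+1}` a vertex of `T`
adjacent to one of `u₀, …, u_k`. Fixing for every vertex an injective numbering of its neighbours
by `0, …, Δ - 1`, the set `T` is recovered from the `t - 1` pairs `(i, j)` where, for `w ∈ T \ {v}`,
`u_i` is the first explored neighbour of `w` and `j` is the number of `w` at `u_i`. Hence there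
are at most `C((t-1)Δ, t-1) ≤ ((t-1)Δ)^(t-1)/(t-1)! ≤ (eΔ)^(t-1)/2` such sets.
-/

open scoped Nat

theorem pow_self_div_factorial_le_exp_div_two {n : ℕ} (hn : n ≠ 0) :
    (n : ℝ) ^ n / n ! ≤ Real.exp n / 2 := by
  obtain ⟨m, rfl⟩ : ∃ m, n = m + 1 := ⟨n - 1, by omega⟩
  -- the last two terms of the exponential series at `m + 1` both equal `(m+1)^(m+1)/(m+1)!`
  have hseries := Real.sum_le_exp_of_nonneg (x := (m + 1 : ℕ)) (by positivity) (m + 2)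
  rw [sum_range_succ, sum_range_succ] at hseries
  have hrest : 0 ≤ ∑ i ∈ range m, ((m + 1 : ℕ) : ℝ) ^ i / i ! := by positivity
  have htwo : ((m + 1 : ℕ) : ℝ) ^ m / m ! = ((m + 1 : ℕ) : ℝ) ^ (m + 1) / (m + 1)! := by
    rw [Nat.factorial_succ, pow_succ]
    push_cast
    field_simp
  linarith

theorem choose_mul_le_exp_mul_pow_div_two {n : ℕ} (hn : n ≠ 0) (Δ : ℕ) :
    (((n * Δ).choose n : ℕ) : ℝ) ≤ (Real.exp 1 * Δ) ^ n / 2 :=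
  calc (((n * Δ).choose n : ℕ) : ℝ)
    _ ≤ ((n * Δ : ℕ) : ℝ) ^ n / n ! := Nat.choose_le_pow_div _ _
    _ = (Δ : ℝ) ^ n * ((n : ℝ) ^ n / n !) := by push_cast; ring
    _ ≤ (Δ : ℝ) ^ n * (Real.exp n / 2) := by
        gcongr (Δ : ℝ) ^ n * ?_
        exact pow_self_div_factorial_le_exp_div_two hn
    _ = (Real.exp 1 * Δ) ^ n / 2 := by rw [mul_pow, Real.exp_one_pow]; ring

namespace SimpleGraph

variable {V : Type*} (G : SimpleGraph V)

lemma exists_adj_dist_eq_of_dist_eq_succ {u w : V} {k : ℕ} (h : G.dist u w = k + 1) :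
    ∃ y, G.Adj y w ∧ G.dist u y = k := by
  obtain ⟨p, hp⟩ := exists_walk_of_dist_ne_zero (G := G) (u := w) (v := u)
    (by rw [dist_comm, h]; omega)
  have hne : w ≠ u := by rintro rfl; simp at h
  obtain ⟨y, hwy, q, rfl⟩ := Walk.exists_eq_cons_of_ne hne p
  rw [dist_comm, h, Walk.length_cons] at hp
  refine ⟨y, hwy.symm, le_antisymm ?_ ?_⟩
  · rw [dist_comm]
    exact (G.dist_le q).trans (by omega)
  · rcases hwy.symm.diff_dist_adj (u := u) with h' | h' | h' <;> omega

section Degree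

variable [Fintype V] [DecidableRel G.Adj] {d : ℕ}

lemma card_dist_eq_one (u : V) : #{w | G.dist u w = 1} = G.degree u := by
  rw [← card_neighborFinset_eq_degree]
  congr 1
  ext w
  simp

lemma card_dist_eq_succ_le (hd : ∀ u, G.degree u ≤ d) (u : V) {k : ℕ} (hk : k ≠ 0) :
    #{w | G.dist u w = k + 1} ≤ #{w | G.dist u w = k} * (d - 1) := by
  -- a vertex at distance `k + 1` is a neighbour of a vertex `y` at distance `k`, but not one of
  -- the (at least one) neighbours of `y` at distance `k - 1`
  have hsub : ({w | G.dist u w = k + 1} : Finset V) ⊆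
      ({y | G.dist u y = k} : Finset V).biUnion
        fun y => {w ∈ G.neighborFinset y | G.dist u w ≠ k - 1} := by
    intro w hw
    obtain ⟨y, hyw, hy⟩ := G.exists_adj_dist_eq_of_dist_eq_succ (mem_filter.1 hw).2
    simp only [mem_biUnion, mem_filter, mem_univ, true_and, mem_neighborFinset]
    exact ⟨y, hy, hyw, by simp at hw; omega⟩
  refine (card_le_card hsub).trans (card_biUnion_le_card_mul _ _ _ fun y hy => ?_)
  obtain ⟨x, hxy, hx⟩ := G.exists_adj_dist_eq_of_dist_eq_succ (u := u) (w := y) (k := k - 1)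
    (by simp at hy; omega)
  have hlt : #{w ∈ G.neighborFinset y | G.dist u w ≠ k - 1} < #(G.neighborFinset y) :=
    card_lt_card (filter_ssubset.2 ⟨x, by simpa [adj_comm] using hxy, by simpa using hx⟩)
  have := hd y
  rw [← card_neighborFinset_eq_degree] at this
  omega

lemma degree_twoThreeGraph_le (hd : ∀ u, G.degree u ≤ d) (u : V) :
    (twoThreeGraph G).degree u ≤ d ^ 3 := by
  have hsub : (twoThreeGraph G).neighborFinset u ⊆
      ({w | G.dist u w = 1 + 1} : Finset V) ∪ ({w | G.dist u w = 2 + 1} : Finset V) := by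
    intro w hw
    rw [mem_neighborFinset] at hw
    simpa using hw.2
  have h2 := (G.card_dist_eq_succ_le hd u one_ne_zero).trans
    (Nat.mul_le_mul_right _ ((G.card_dist_eq_one u).trans_le (hd u)))
  have h3 := (G.card_dist_eq_succ_le hd u two_ne_zero).trans (Nat.mul_le_mul_right _ h2)
  have hd3 : d * (d - 1) + d * (d - 1) * (d - 1) ≤ d ^ 3 := by
    rcases d with _ | d
    · simp
    · simp only [Nat.add_sub_cancel]; nlinarith
  rw [← card_neighborFinset_eq_degree]
  calc _ ≤ _ := card_le_card hsub
    _ ≤ _ := card_union_le _ _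
    _ ≤ d ^ 3 := by omega
end Degree

section Exploration

variable (v : V) (T : Finset V)

noncomputable def outerBoundary (S : Finset V) : Finset V := {w ∈ T \ S | ∃ x ∈ S, G.Adj x w}

/-- The choice depends on `S` only through its boundary in `T`; this is what lets the
exploration be replayed from `exploreCode` below. -/
noncomputable def exploreNext (S : Finset V) : V :=
  if h : (G.outerBoundary T S).Nonempty then h.choose else v

noncomputable def explored : ℕ → Finset V
  | 0 => {v}
  | k + 1 => insert (G.exploreNext v T (explored k)) (explored k)

noncomputable def exploreSeq : ℕ → V
  | 0 => v
  | k + 1 => G.exploreNext v T (G.explored v T k)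

lemma explored_eq_image (k : ℕ) :
    G.explored v T k = (range (k + 1)).image (G.exploreSeq v T) := by
  induction k with
  | zero => rfl
  | succ k ih => rw [range_add_one, image_insert, ← ih]; rfl

lemma explored_succ (k : ℕ) :
    G.explored v T (k + 1) = insert (G.exploreSeq v T (k + 1)) (G.explored v T k) := rfl

variable {G v T}

lemma outerBoundary_nonempty (hT : (G.induce (T : Set V)).Connected) {S : Finset V}
    (hST : S ⊂ T) (hS : S.Nonempty) : (G.outerBoundary T S).Nonempty := by
  obtain ⟨x, hx⟩ := hS
  obtain ⟨w, hwT, hwS⟩ := exists_of_ssubset hST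
  obtain ⟨p⟩ := hT ⟨x, hST.subset hx⟩ ⟨w, hwT⟩
  obtain ⟨e, -, he, he'⟩ := p.exists_boundary_dart {y | (y : V) ∈ S} hx hwS
  exact ⟨e.snd, mem_filter.2 ⟨mem_sdiff.2 ⟨e.snd.2, he'⟩, e.fst, he, e.adj⟩⟩

lemma exploreNext_mem (hv : v ∈ T) (S : Finset V) : G.exploreNext v T S ∈ T := by
  unfold exploreNext
  split_ifs with h
  · exact (mem_sdiff.1 (mem_filter.1 h.choose_spec).1).1
  · exact hv

lemma explored_subset (hv : v ∈ T) (k : ℕ) : G.explored v T k ⊆ T := by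
  induction k with
  | zero => simpa [explored] using hv
  | succ k ih => exact insert_subset (exploreNext_mem hv _) ih

lemma start_mem_explored (k : ℕ) : v ∈ G.explored v T k := by
  rw [explored_eq_image]
  exact mem_image.2 ⟨0, by simp, rfl⟩

lemma exploreSeq_succ_mem (hT : (G.induce (T : Set V)).Connected) (hv : v ∈ T) {k : ℕ}
    (hk : k + 1 < #T) :
    G.exploreSeq v T (k + 1) ∈ G.outerBoundary T (G.explored v T k) := by
  have hcard : #(G.explored v T k) < #T := by
    rw [explored_eq_image]
    exact card_image_le.trans_lt (by simpa using hk)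
  have hne := outerBoundary_nonempty hT
    (ssubset_of_subset_of_ne (explored_subset hv k) (ne_of_apply_ne card hcard.ne))
    ⟨v, start_mem_explored k⟩
  show G.exploreNext v T _ ∈ _
  rw [exploreNext, dif_pos hne]
  exact hne.choose_spec

lemma card_explored (hT : (G.induce (T : Set V)).Connected) (hv : v ∈ T) {k : ℕ} (hk : k < #T) :
    #(G.explored v T k) = k + 1 := by
  induction k with
  | zero => rfl
  | succ k ih =>
    have hnew := (mem_sdiff.1 (mem_filter.1 (exploreSeq_succ_mem hT hv hk)).1).2
    rw [explored_succ, card_insert_of_notMem hnew, ih (by omega)]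

lemma explored_card_sub_one (hT : (G.induce (T : Set V)).Connected) (hv : v ∈ T) :
    G.explored v T (#T - 1) = T := by
  have hpos : 0 < #T := card_pos.2 ⟨v, hv⟩
  refine eq_of_subset_of_card_le (explored_subset hv _) ?_
  rw [card_explored hT hv (by omega)]
  omega

lemma exists_adj_exploreSeq (hT : (G.induce (T : Set V)).Connected) (hv : v ∈ T) {w : V}
    (hw : w ∈ T) (hwv : w ≠ v) :
    ∃ j, j + 1 < #T ∧ G.Adj (G.exploreSeq v T j) w := by
  rw [← explored_card_sub_one hT hv, explored_eq_image] at hw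
  obtain ⟨m, hm, rfl⟩ := mem_image.1 hw
  have hm0 : m ≠ 0 := by rintro rfl; exact hwv rfl
  obtain ⟨j, rfl⟩ : ∃ j, m = j + 1 := ⟨m - 1, by omega⟩
  rw [mem_range] at hm
  obtain ⟨-, x, hx, hxw⟩ := mem_filter.1 (exploreSeq_succ_mem hT hv (k := j) (by omega))
  rw [explored_eq_image] at hx
  obtain ⟨i, hi, rfl⟩ := mem_image.1 hx
  exact ⟨i, by rw [mem_range] at hi; omega, hxw⟩

variable (G v T) in
noncomputable def exploreParent (w : V) : ℕ := sInf {j | G.Adj (G.exploreSeq v T j) w}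

lemma adj_exploreParent (hT : (G.induce (T : Set V)).Connected) (hv : v ∈ T) {w : V}
    (hw : w ∈ T) (hwv : w ≠ v) :
    G.Adj (G.exploreSeq v T (G.exploreParent v T w)) w :=
  Nat.sInf_mem (s := {j | G.Adj (G.exploreSeq v T j) w})
    (let ⟨j, _, hj⟩ := exists_adj_exploreSeq hT hv hw hwv; ⟨j, hj⟩)

lemma exploreParent_lt (hT : (G.induce (T : Set V)).Connected) (hv : v ∈ T) {w : V}
    (hw : w ∈ T) (hwv : w ≠ v) : G.exploreParent v T w + 1 < #T := by
  obtain ⟨j, hj, hadj⟩ := exists_adj_exploreSeq hT hv hw hwv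
  have : G.exploreParent v T w ≤ j := Nat.sInf_le hadj
  omega

variable (G v T) in
noncomputable def exploreCode (port : V → V → ℕ) : Finset (ℕ × ℕ) :=
  (T.erase v).image fun w =>
    (G.exploreParent v T w, port (G.exploreSeq v T (G.exploreParent v T w)) w)

variable {port : V → V → ℕ}

lemma card_exploreCode (hport : ∀ u, Set.InjOn (port u) (G.neighborSet u))
    (hT : (G.induce (T : Set V)).Connected) (hv : v ∈ T) :
    #(G.exploreCode v T port) = #T - 1 := by
  rw [exploreCode, card_image_of_injOn, card_erase_of_mem hv]
  intro w hw w' hw' h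
  obtain ⟨hwv, hwT⟩ := mem_erase.1 (mem_coe.1 hw)
  obtain ⟨hwv', hwT'⟩ := mem_erase.1 (mem_coe.1 hw')
  obtain ⟨hpar, hlab⟩ := Prod.mk.inj h
  rw [← hpar] at hlab
  refine hport _ (adj_exploreParent hT hv hwT hwv) ?_ hlab
  rw [mem_neighborSet, hpar]
  exact adj_exploreParent hT hv hwT' hwv'

lemma exploreCode_subset (hT : (G.induce (T : Set V)).Connected) (hv : v ∈ T) {Δ : ℕ}
    (hΔ : ∀ u, Set.MapsTo (port u) (G.neighborSet u) (Set.Iio Δ)) :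
    G.exploreCode v T port ⊆ range (#T - 1) ×ˢ range Δ := by
  intro p hp
  obtain ⟨w, hw, rfl⟩ := mem_image.1 hp
  obtain ⟨hwv, hwT⟩ := mem_erase.1 hw
  have := exploreParent_lt hT hv hwT hwv
  simp only [mem_product, mem_range]
  exact ⟨by omega, hΔ _ (adj_exploreParent hT hv hwT hwv)⟩

lemma mem_outerBoundary_explored_iff (hport : ∀ u, Set.InjOn (port u) (G.neighborSet u))
    (hT : (G.induce (T : Set V)).Connected) (hv : v ∈ T) {k : ℕ} {w : V} :
    w ∈ G.outerBoundary T (G.explored v T k) ↔ w ∉ G.explored v T k ∧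
      ∃ i ≤ k, G.Adj (G.exploreSeq v T i) w ∧
        (i, port (G.exploreSeq v T i) w) ∈ G.exploreCode v T port := by
  simp only [outerBoundary, mem_filter, mem_sdiff, explored_eq_image, exists_mem_image,
    mem_range, Nat.lt_succ_iff]
  constructor
  · rintro ⟨⟨hwT, hwk⟩, j, hjk, hjw⟩
    have hwv : w ≠ v := by rintro rfl; exact hwk (mem_image.2 ⟨0, by simp, rfl⟩)
    exact ⟨hwk, _, (Nat.sInf_le hjw).trans hjk, adj_exploreParent hT hv hwT hwv,
      mem_image.2 ⟨w, mem_erase.2 ⟨hwv, hwT⟩, rfl⟩⟩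
  · rintro ⟨hwk, i, hik, hiw, hcode⟩
    obtain ⟨w', hw', hw'w⟩ := mem_image.1 hcode
    obtain ⟨hwv', hwT'⟩ := mem_erase.1 hw'
    obtain ⟨rfl, hlab⟩ := Prod.mk.inj hw'w
    obtain rfl : w' = w := hport _ (adj_exploreParent hT hv hwT' hwv') hiw hlab
    exact ⟨⟨hwT', hwk⟩, _, hik, hiw⟩

lemma exploreSeq_eq_of_exploreCode_eq (hport : ∀ u, Set.InjOn (port u) (G.neighborSet u))
    {T' : Finset V} (hT : (G.induce (T : Set V)).Connected) (hv : v ∈ T)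
    (hT' : (G.induce (T' : Set V)).Connected) (hv' : v ∈ T')
    (h : G.exploreCode v T port = G.exploreCode v T' port) :
    G.exploreSeq v T = G.exploreSeq v T' := by
  funext k
  induction k using Nat.strong_induction_on with
  | _ k ih =>
  rcases k with _ | k
  · rfl
  have hexp : G.explored v T k = G.explored v T' k := by
    rw [explored_eq_image, explored_eq_image]
    exact image_congr fun i hi => ih i (by simp at hi; omega)
  have hbd : G.outerBoundary T (G.explored v T k) = G.outerBoundary T' (G.explored v T' k) := by
    ext w
    rw [mem_outerBoundary_explored_iff hport hT hv, mem_outerBoundary_explored_iff hport hT' hv',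
      hexp, h]
    refine and_congr_right' (exists_congr fun i => and_congr_right fun hi => ?_)
    rw [ih i (by omega)]
  show G.exploreNext v T _ = G.exploreNext v T' _
  unfold exploreNext
  rw [hbd]

lemma eq_of_exploreCode_eq (hport : ∀ u, Set.InjOn (port u) (G.neighborSet u))
    {T' : Finset V} (hT : (G.induce (T : Set V)).Connected) (hv : v ∈ T)
    (hT' : (G.induce (T' : Set V)).Connected) (hv' : v ∈ T') (hcard : #T = #T')
    (h : G.exploreCode v T port = G.exploreCode v T' port) : T = T' := by
  rw [← explored_card_sub_one hT hv, ← explored_card_sub_one hT' hv', hcard, explored_eq_image,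
    explored_eq_image, exploreSeq_eq_of_exploreCode_eq hport hT hv hT' hv' h]

end Exploration

lemma exists_port_numbering [G.LocallyFinite] {Δ : ℕ} (hΔ : ∀ u, G.degree u ≤ Δ) :
    ∃ port : V → V → ℕ, (∀ u, Set.InjOn (port u) (G.neighborSet u)) ∧
      ∀ u, Set.MapsTo (port u) (G.neighborSet u) (Set.Iio Δ) := by
  let port u w : ℕ :=
    if h : w ∈ G.neighborSet u then Fintype.equivFin (G.neighborSet u) ⟨w, h⟩ else 0
  refine ⟨port, fun u w hw w' hw' heq => ?_, fun u w hw => ?_⟩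
  · simp only [port, dif_pos hw, dif_pos hw'] at heq
    exact congrArg Subtype.val ((Fintype.equivFin _).injective (Fin.ext heq))
  · simp only [port, dif_pos hw, Set.mem_Iio]
    exact (Fin.isLt _).trans_le ((card_neighborSet_eq_degree G u).trans_le (hΔ u))

theorem card_connected_finsets_le [Fintype V] [DecidableEq V] [DecidableRel G.Adj] {Δ : ℕ}
    (hΔ : ∀ u, G.degree u ≤ Δ) (v : V) (t : ℕ) :
    #{T : Finset V | v ∈ T ∧ #T = t ∧ (G.induce (T : Set V)).Connected} ≤
      ((t - 1) * Δ).choose (t - 1) := by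
  obtain ⟨port, hport, hportΔ⟩ := G.exists_port_numbering hΔ
  calc _ ≤ #(powersetCard (t - 1) (range (t - 1) ×ˢ range Δ)) := by
        refine card_le_card_of_injOn (G.exploreCode v · port) ?_ ?_
        · intro T hTmem
          obtain ⟨hv, rfl, hT⟩ := (mem_filter.1 hTmem).2
          exact mem_powersetCard.2
            ⟨exploreCode_subset hT hv hportΔ, card_exploreCode hport hT hv⟩
        · intro T hTmem T' hTmem' h
          obtain ⟨hv, hcard, hT⟩ := (mem_filter.1 hTmem).2
          obtain ⟨hv', hcard', hT'⟩ := (mem_filter.1 hTmem').2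
          exact eq_of_exploreCode_eq hport hT hv hT' hv' (hcard.trans hcard'.symm) h
    _ = ((t - 1) * Δ).choose (t - 1) := by
        rw [card_powersetCard, card_product, card_range, card_range]

end SimpleGraph

/-- If `G` has maximum degree at most `d` and `v` is a vertex, then for every `t ≥ 2` the
number of `{2,3}`-trees of size `t` in `G` containing `v` is at most `(e·d³)^(t-1)/2`. -/
theorem count_twoThreeTrees_le
    {V : Type*} [Fintype V] [DecidableEq V] (G : SimpleGraph V) [DecidableRel G.Adj]
    (d : ℕ) (hd : ∀ u, G.degree u ≤ d) (v : V) (t : ℕ) (ht : 2 ≤ t) :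
    (((Finset.univ : Finset (Finset V)).filter fun T =>
        v ∈ T ∧ T.card = t ∧ IsTwoThreeTree G T).card : ℝ)
      ≤ (Real.exp 1 * (d : ℝ) ^ 3) ^ (t - 1) / 2 := by
  have hsub : ((Finset.univ : Finset (Finset V)).filter fun T =>
        v ∈ T ∧ T.card = t ∧ IsTwoThreeTree G T) ⊆
      ({T | v ∈ T ∧ #T = t ∧ ((twoThreeGraph G).induce (T : Set V)).Connected} :
        Finset (Finset V)) := by
    intro T hT
    obtain ⟨hv, hcard, -, hconn⟩ := (mem_filter.1 hT).2
    exact mem_filter.2 ⟨mem_univ T, hv, hcard, hconn⟩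
  have hcount :=
    (twoThreeGraph G).card_connected_finsets_le (G.degree_twoThreeGraph_le hd) v t
  calc _ ≤ (((t - 1) * d ^ 3).choose (t - 1) : ℝ) := by
        exact_mod_cast (card_le_card hsub).trans hcount
    _ ≤ (Real.exp 1 * ((d ^ 3 : ℕ) : ℝ)) ^ (t - 1) / 2 :=
        choose_mul_le_exp_mul_pow_div_two (by omega) _
    _ = (Real.exp 1 * (d : ℝ) ^ 3) ^ (t - 1) / 2 := by push_cast; rfl
end

section
/- In the CSP setting, suppose that: each constraint shares a variable with at most Δ other constraints; each variable appears in at most Δ constraints; ℙ[C] ≤ p″·q for every C ∈ 𝒞, where p″ ∈ (0,1) satisfies 3·p″·q·Δ ≤ 1/2. Let μ_S denote the uniform distribution on satisfying assignments (which is well-defined by the Lovász Local Lemma under these hypotheses). Then for every variable v ∈ V, the total variation distance between the marginal distribution of v under μ_S and the uniform distribution on [q] satisfies TV( μ_S[v = ·], ℙ[v = ·] ) ≤ (1 − 3p″q)^{−Δ} − 1. -/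
/-!
Put `x = 3p″q`. Bernoulli's inequality gives `(1 - x)^Δ ≥ 1 - xΔ ≥ 1/2`, so every constraint
has `ℙ[C] ≤ x/3 ≤ x (1 - x)^Δ`, and the symmetric Lovász Local Lemma applies in its counting
form `#{C violated, S satisfied} ≤ x · #{S satisfied}` for `C ∉ S`.

Let `A` be the constraints not containing `v` and `B` those containing it. Satisfying `A` does
not depend on `v`, so exactly a `1/q` fraction of the assignments satisfying `A` have `σ v = a`;
adding the at most `Δ` constraints of `B` one at a time keeps at least a `1 - x` fraction each
time. Hence `μ_S[v = a] ≤ (1 - x)^(-Δ) / q` for every `a`, and the total variation distance,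
being the sum of the positive parts of `μ_S[v = a] - 1/q`, is at most `(1 - x)^(-Δ) - 1`.
-/

open Finset
open scoped Classical

section Independence

variable {V α : Type*} [Fintype V] [DecidableEq V] [Fintype α]

/-- Exchanging the coordinates outside `T` of two assignments is an involution
of `(V → α) × (V → α)` carrying `{(σ, τ) | E σ ∧ F σ}` onto `{(σ, τ) | E σ ∧ F τ}`. -/
theorem card_filter_and_mul_card_eq {T : Finset V} {E F : (V → α) → Prop} [DecidablePred E]
    [DecidablePred F] (hE : DependsOn E T) (hF : DependsOn F (↑T)ᶜ) :
    #{σ | E σ ∧ F σ} * Fintype.card (V → α) = #{σ | E σ} * #{σ | F σ} := by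
  let swap : (V → α) × (V → α) → (V → α) × (V → α) :=
    fun p => (T.piecewise p.1 p.2, T.piecewise p.2 p.1)
  have swap_swap : ∀ p, swap (swap p) = p := by
    rintro ⟨σ, τ⟩
    ext w <;> by_cases hw : w ∈ T <;> simp [swap, hw]
  have hE' : ∀ σ τ, E (T.piecewise σ τ) = E σ := fun σ τ =>
    hE fun w hw => piecewise_eq_of_mem _ _ _ hw
  have hF' : ∀ σ τ, F (T.piecewise σ τ) = F τ := fun σ τ =>
    hF fun w hw => piecewise_eq_of_notMem _ _ _ hw
  rw [← card_univ, ← card_product, ← card_product]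
  exact card_nbij' swap swap (by simp [Set.MapsTo, swap, hE', hF'])
    (by simp [Set.MapsTo, swap, hE', hF']) (fun p _ => swap_swap p) (fun p _ => swap_swap p)

theorem Fintype.card_filter_eval_eq_mul [DecidableEq α] (v : V) (a : α) :
    #{σ : V → α | σ v = a} * Fintype.card α = Fintype.card (V → α) := by
  have hfiber := Fintype.card_filter_piFinset_const_eq_of_mem univ v (mem_univ a)
  rw [Fintype.piFinset_univ, card_univ] at hfiber
  have hV : 0 < Fintype.card V := Fintype.card_pos_iff.2 ⟨v⟩
  rw [hfiber, ← pow_succ, Fintype.card_fun, Nat.sub_add_cancel hV]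

end Independence

section LovaszLocalLemma

variable {Ω ι : Type*} (viol : ι → Ω → Prop)

def Satisfies (S : Finset ι) (σ : Ω) : Prop := ∀ j ∈ S, ¬ viol j σ

variable {viol}

theorem satisfies_anti {S S' : Finset ι} (h : S ⊆ S') {σ : Ω} (hσ : Satisfies viol S' σ) :
    Satisfies viol S σ :=
  fun j hj => hσ j (h hj)

theorem satisfies_univ [Fintype ι] {σ : Ω} : Satisfies viol univ σ ↔ ∀ j, ¬ viol j σ := by
  simp [Satisfies]

variable [Fintype Ω]

theorem one_sub_mul_card_satisfies_le [DecidableEq ι] {x : ℝ} {i : ι} {S : Finset ι}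
    (h : (#{σ | viol i σ ∧ Satisfies viol S σ} : ℝ) ≤ x * #{σ | Satisfies viol S σ}) :
    (1 - x) * #{σ | Satisfies viol S σ} ≤ #{σ | Satisfies viol (insert i S) σ} := by
  have hsplit : (#{σ | viol i σ ∧ Satisfies viol S σ} : ℝ)
      + #{σ | Satisfies viol (insert i S) σ} = #{σ | Satisfies viol S σ} := by
    norm_cast
    rw [← card_filter_add_card_filter_not (s := {σ | Satisfies viol S σ}) (viol i),
      filter_filter, filter_filter]
    congr 3 <;> ext σ <;> simp [Satisfies, and_comm]
  linarith

theorem pow_mul_card_satisfies_le [DecidableEq ι] {x : ℝ} (hx : x ≤ 1) {A B : Finset ι}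
    (hAB : Disjoint A B)
    (h : ∀ S ⊂ A ∪ B, ∀ i ∉ S,
      (#{σ | viol i σ ∧ Satisfies viol S σ} : ℝ) ≤ x * #{σ | Satisfies viol S σ}) :
    (1 - x) ^ #B * #{σ | Satisfies viol A σ} ≤ #{σ | Satisfies viol (A ∪ B) σ} := by
  induction B using Finset.induction_on with
  | empty => simp
  | @insert j B hj ih =>
    rw [disjoint_insert_right] at hAB
    have hjAB : j ∉ A ∪ B := by simp [hj, hAB.1]
    have hlt : A ∪ B ⊂ A ∪ insert j B := by
      rw [union_insert]
      exact ssubset_insert hjAB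
    have ih := ih hAB.2 fun S hS => h S (hS.trans hlt)
    have step := one_sub_mul_card_satisfies_le (h (A ∪ B) hlt j hjAB)
    rw [← union_insert] at step
    rw [card_insert_of_notMem hj, pow_succ, mul_comm _ (1 - x), mul_assoc]
    exact (mul_le_mul_of_nonneg_left ih (by linarith)).trans step

/-- The symmetric Lovász Local Lemma, with dependency neighbourhoods `Γ i`, in counting form. -/
theorem card_violates_and_satisfies_le [Nonempty Ω] {Γ : ι → Finset ι} {Δ : ℕ}
    (hΓ : ∀ i, #(Γ i) ≤ Δ) {x : ℝ} (hx0 : 0 ≤ x) (hx1 : x ≤ 1)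
    (hviol : ∀ i, (#{σ | viol i σ} : ℝ) ≤ x * (1 - x) ^ Δ * Fintype.card Ω)
    (hindep : ∀ i S, i ∉ S → Disjoint S (Γ i) →
      #{σ | viol i σ ∧ Satisfies viol S σ} * Fintype.card Ω
        ≤ #{σ | viol i σ} * #{σ | Satisfies viol S σ})
    (S : Finset ι) (i : ι) (hi : i ∉ S) :
    (#{σ | viol i σ ∧ Satisfies viol S σ} : ℝ) ≤ x * #{σ | Satisfies viol S σ} := by
  induction S using Finset.strongInduction generalizing i with
  | H S ih =>
    -- `viol i` is independent of the constraints `S₂` far from `i`; the at most `Δ`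
    -- neighbours `S₁` are then added back at a cost of a factor `1 - x` each.
    set S₁ := S ∩ Γ i
    set S₂ := S \ Γ i
    have hS : S₂ ∪ S₁ = S := sdiff_union_inter S (Γ i)
    have hmono : #{σ | viol i σ ∧ Satisfies viol S σ}
        ≤ #{σ | viol i σ ∧ Satisfies viol S₂ σ} :=
      card_le_card fun σ => by
        simpa only [mem_filter_univ] using And.imp_right (satisfies_anti sdiff_subset)
    have hfar : (#{σ | viol i σ ∧ Satisfies viol S₂ σ} : ℝ) * Fintype.card Ω
        ≤ x * (1 - x) ^ Δ * #{σ | Satisfies viol S₂ σ} * Fintype.card Ω := by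
      have := hindep i S₂ (fun h => hi (mem_sdiff.1 h).1) sdiff_disjoint
      calc _ ≤ (#{σ | viol i σ} : ℝ) * #{σ | Satisfies viol S₂ σ} := by exact_mod_cast this
        _ ≤ _ := by nlinarith [hviol i]
    have hpow : (1 - x) ^ Δ ≤ (1 - x) ^ #S₁ :=
      pow_le_pow_of_le_one (by linarith) (by linarith)
        ((card_le_card inter_subset_right).trans (hΓ i))
    have hnear := pow_mul_card_satisfies_le hx1 (disjoint_sdiff_inter S (Γ i))
      fun S' hS' j hj => ih S' (hS ▸ hS') j hj
    rw [hS] at hnear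
    calc (#{σ | viol i σ ∧ Satisfies viol S σ} : ℝ)
        ≤ #{σ | viol i σ ∧ Satisfies viol S₂ σ} := by exact_mod_cast hmono
      _ ≤ x * (1 - x) ^ Δ * #{σ | Satisfies viol S₂ σ} :=
        le_of_mul_le_mul_right hfar (by exact_mod_cast Fintype.card_pos)
      _ ≤ x * ((1 - x) ^ #S₁ * #{σ | Satisfies viol S₂ σ}) := by
        rw [mul_assoc]
        gcongr
      _ ≤ x * #{σ | Satisfies viol S σ} := by gcongr

theorem card_satisfies_pos [Nonempty Ω] {x : ℝ} (hx : x < 1)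
    (h : ∀ S, ∀ i ∉ S,
      (#{σ | viol i σ ∧ Satisfies viol S σ} : ℝ) ≤ x * #{σ | Satisfies viol S σ})
    (S : Finset ι) : 0 < #{σ | Satisfies viol S σ} := by
  have key := pow_mul_card_satisfies_le hx.le (disjoint_empty_left S) fun S' _ => h S'
  have hempty : #{σ | Satisfies viol ∅ σ} = Fintype.card Ω := by simp [Satisfies]
  rw [empty_union, hempty] at key
  have : 0 < 1 - x := sub_pos.2 hx
  have : 0 < Fintype.card Ω := Fintype.card_pos
  exact Nat.cast_pos.1 (key.trans_lt' (by positivity))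

end LovaszLocalLemma

section CSP

variable {V α ι : Type*} {vbl : ι → Finset V} {viol : ι → (V → α) → Prop}

theorem satisfies_dependsOn (hdep : ∀ j, DependsOn (viol j) (vbl j)) {S : Finset ι}
    {T : Finset V} (hS : ∀ j ∈ S, Disjoint (vbl j) T) :
    DependsOn (Satisfies viol S) (↑T)ᶜ := fun σ τ h =>
  propext <| forall₂_congr fun j hj => by
    rw [hdep j fun w hw => h w fun hwT => disjoint_left.1 (hS j hj) hw hwT]

variable [Fintype V] [DecidableEq V] [Fintype α] [Fintype ι]

noncomputable def depNeighbors [DecidableEq ι] (vbl : ι → Finset V) (i : ι) : Finset ι :=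
  {j | j ≠ i ∧ (vbl i ∩ vbl j).Nonempty}

theorem card_violates_and_satisfies_mul_eq [DecidableEq ι]
    (hdep : ∀ j, DependsOn (viol j) (vbl j)) {i : ι} {S : Finset ι} (hi : i ∉ S)
    (hS : Disjoint S (depNeighbors vbl i)) :
    #{σ | viol i σ ∧ Satisfies viol S σ} * Fintype.card (V → α)
      = #{σ | viol i σ} * #{σ | Satisfies viol S σ} := by
  refine card_filter_and_mul_card_eq (hdep i) (satisfies_dependsOn hdep fun j hj => ?_)
  have hji : j ≠ i := fun h => hi (h ▸ hj)
  have : j ∉ depNeighbors vbl i := disjoint_left.1 hS hj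
  simp only [depNeighbors, mem_filter_univ, not_and, not_nonempty_iff_eq_empty] at this
  rw [disjoint_iff_inter_eq_empty, inter_comm, this hji]

theorem card_satisfies_and_eval_mul_le [DecidableEq α] [Nonempty α]
    (hdep : ∀ j, DependsOn (viol j) (vbl j)) {Δ : ℕ} {x : ℝ} (hx0 : 0 ≤ x) (hx1 : x ≤ 1)
    (hLLL : ∀ S, ∀ i ∉ S,
      (#{σ | viol i σ ∧ Satisfies viol S σ} : ℝ) ≤ x * #{σ | Satisfies viol S σ})
    {v : V} (hv : #{j | v ∈ vbl j} ≤ Δ) (a : α) :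
    (#{σ | Satisfies viol univ σ ∧ σ v = a} : ℝ) * Fintype.card α * (1 - x) ^ Δ
      ≤ #{σ | Satisfies viol univ σ} := by
  set A : Finset ι := {j | v ∉ vbl j}
  have hfiber : #{σ | σ v = a ∧ Satisfies viol A σ} * Fintype.card α
      = #{σ | Satisfies viol A σ} := by
    have hind := card_filter_and_mul_card_eq (T := {v}) (E := fun σ => σ v = a)
      (fun σ τ h => by simp only [h v (mem_singleton_self v)])
      (satisfies_dependsOn (S := A) hdep fun j hj => by simpa [A] using hj)
    apply Nat.eq_of_mul_eq_mul_right (Fintype.card_pos : 0 < Fintype.card (V → α))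
    rw [mul_right_comm, hind, ← Fintype.card_filter_eval_eq_mul v a]
    ring
  have hdrop : #{σ | Satisfies viol univ σ ∧ σ v = a}
      ≤ #{σ | σ v = a ∧ Satisfies viol A σ} :=
    card_le_card fun σ => by
      simp only [mem_filter_univ]
      exact fun h => ⟨h.2, satisfies_anti (subset_univ A) h.1⟩
  have hpeel : (1 - x) ^ Δ * #{σ | Satisfies viol A σ} ≤ #{σ | Satisfies viol univ σ} := by
    have := pow_mul_card_satisfies_le hx1
      (disjoint_filter_filter_not univ univ (v ∈ vbl ·)).symm fun S _ => hLLL S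
    rw [union_comm, filter_union_filter_not_eq] at this
    refine le_trans ?_ this
    exact mul_le_mul_of_nonneg_right (pow_le_pow_of_le_one (by linarith) (by linarith) hv)
      (Nat.cast_nonneg _)
  calc (#{σ | Satisfies viol univ σ ∧ σ v = a} : ℝ) * Fintype.card α * (1 - x) ^ Δ
      ≤ #{σ | σ v = a ∧ Satisfies viol A σ} * Fintype.card α * (1 - x) ^ Δ := by gcongr
    _ = (1 - x) ^ Δ * #{σ | Satisfies viol A σ} := by
      rw [← hfiber]
      push_cast
      ring
    _ ≤ _ := hpeel

end CSP

theorem half_sum_abs_sub_le {ι : Type*} [Fintype ι] {f g c : ι → ℝ}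
    (hsum : ∑ i, f i = ∑ i, g i) (hle : ∀ i, f i - g i ≤ c i) (hc : ∀ i, 0 ≤ c i) :
    1 / 2 * ∑ i, |f i - g i| ≤ ∑ i, c i := by
  have habs : ∀ d : ℝ, |d| = 2 * d⁺ - d := fun d => by
    nth_rw 3 [← posPart_sub_negPart d]
    rw [← posPart_add_negPart]
    ring
  have h0 : ∑ i, (f i - g i) = 0 := by rw [sum_sub_distrib, hsum, sub_self]
  simp only [habs, sum_sub_distrib, ← mul_sum, h0, sub_zero]
  rw [one_div, inv_mul_cancel_left₀ two_ne_zero]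
  exact sum_le_sum fun i _ => sup_le (hle i) (hc i)

theorem half_sum_abs_card_filter_div_sub_le {Ω α : Type*} [Fintype α] [DecidableEq α]
    {s : Finset Ω} (hs : s.Nonempty) (f : Ω → α) {K : ℝ} (hK0 : 0 < K) (hK1 : K ≤ 1)
    (h : ∀ a, (#{x ∈ s | f x = a} : ℝ) * Fintype.card α * K ≤ #s) :
    1 / 2 * ∑ a, |(#{x ∈ s | f x = a} : ℝ) / #s - 1 / Fintype.card α| ≤ K⁻¹ - 1 := by
  have : Nonempty α := ⟨f hs.choose⟩
  have hα : (0 : ℝ) < Fintype.card α := by exact_mod_cast Fintype.card_pos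
  have hs' : (0 : ℝ) < #s := by exact_mod_cast hs.card_pos
  refine (half_sum_abs_sub_le (c := fun _ => (K⁻¹ - 1) / Fintype.card α) ?_ ?_ ?_).trans_eq ?_
  · rw [← sum_div, ← Nat.cast_sum, ← card_eq_sum_card_fiberwise fun x _ => mem_univ (f x),
      div_self hs'.ne']
    simp [hα.ne']
  · intro a
    rw [sub_div, one_div, sub_le_sub_iff_right, div_le_iff₀ hs', div_mul_eq_mul_div,
      le_div_iff₀ hα, inv_mul_eq_div, le_div_iff₀ hK0]
    exact h a
  · exact fun _ => div_nonneg (sub_nonneg.2 ((one_le_inv₀ hK0).2 hK1)) hα.le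
  · simp [mul_div_cancel₀, hα.ne']

theorem one_half_le_one_sub_pow {x : ℝ} {Δ : ℕ} (hx : x ≤ 2) (h : x * Δ ≤ 1 / 2) :
    1 / 2 ≤ (1 - x) ^ Δ := by
  have := one_add_mul_le_pow (a := -x) (by linarith) Δ
  rw [← sub_eq_add_neg] at this
  linarith

/-- **Marginals of the uniform distribution on satisfying assignments are near-uniform.**
In the CSP setting (variables `Fin n` with values in `Fin q`, constraints `Fin m`, where
constraint `j` depends only on the variables `vbl j` and `viol j σ` means `σ` violates
constraint `j`), suppose each constraint shares a variable with at most `Δ` other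
constraints, each variable appears in at most `Δ` constraints, and `ℙ[C] ≤ p″·q` for every
constraint `C`, where `3·p″·q·Δ ≤ 1/2`. Then for every variable `v`, the total variation
distance between the marginal at `v` of the uniform distribution `μ_S` on satisfying
assignments and the uniform distribution on `Fin q` is at most `(1 − 3p″q)^(−Δ) − 1`.
Here `μ_S[v = a]` is rendered as
`#{σ satisfying, σ v = a} / #{σ satisfying}` and the total variation distance as
`(1/2)·∑_a |μ_S[v = a] − 1/q|`. -/
theorem tv_marginal_le {n q m : ℕ} (hq : 0 < q)
    (vbl : Fin m → Finset (Fin n)) (viol : Fin m → (Fin n → Fin q) → Prop)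
    (hdep : ∀ j (σ τ : Fin n → Fin q), (∀ v ∈ vbl j, σ v = τ v) → (viol j σ ↔ viol j τ))
    (Δ : ℕ) (hΔ : 1 ≤ Δ)
    (hdegC : ∀ i : Fin m,
      (Finset.univ.filter fun j => j ≠ i ∧ (vbl i ∩ vbl j).Nonempty).card ≤ Δ)
    (hdegV : ∀ v : Fin n,
      (Finset.univ.filter fun j : Fin m => v ∈ vbl j).card ≤ Δ)
    (p'' : ℝ) (hp'' : p'' ∈ Set.Ioo (0 : ℝ) 1)
    (hpC : ∀ j : Fin m,
      ((Finset.univ.filter fun σ : Fin n → Fin q => viol j σ).card : ℝ) / (q : ℝ) ^ n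
        ≤ p'' * q)
    (hsmall : 3 * p'' * q * Δ ≤ 1 / 2)
    (v : Fin n) :
    (1 / 2) * ∑ a : Fin q,
        |((Finset.univ.filter fun σ : Fin n → Fin q =>
              (∀ j, ¬ viol j σ) ∧ σ v = a).card : ℝ) /
            ((Finset.univ.filter fun σ : Fin n → Fin q => ∀ j, ¬ viol j σ).card : ℝ)
          - 1 / q|
      ≤ ((1 - 3 * p'' * q) ^ Δ)⁻¹ - 1 := by
  set x := 3 * p'' * q
  have : Nonempty (Fin q) := ⟨⟨0, hq⟩⟩
  have hx0 : 0 ≤ x := by have := hp''.1; positivity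
  have hx1 : x ≤ 1 / 2 := by nlinarith [(Nat.one_le_cast (α := ℝ)).2 hΔ]
  have hviol (i : Fin m) :
      (#{σ | viol i σ} : ℝ) ≤ x * (1 - x) ^ Δ * Fintype.card (Fin n → Fin q) := by
    have := (div_le_iff₀ (by positivity)).1 (hpC i)
    simp only [Fintype.card_fun, Fintype.card_fin, Nat.cast_pow]
    nlinarith [one_half_le_one_sub_pow (by linarith) hsmall,
      pow_pos (Nat.cast_pos.2 hq : (0 : ℝ) < q) n]
  have hdepOn (j : Fin m) : DependsOn (viol j) (vbl j) := fun σ τ h => propext (hdep j σ τ h)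
  have hLLL := card_violates_and_satisfies_le (Γ := depNeighbors vbl) hdegC hx0 (by linarith)
    hviol fun i S hi hS => (card_violates_and_satisfies_mul_eq hdepOn hi hS).le
  have hsat := card_satisfies_pos (by linarith) hLLL univ
  have hmarg := card_satisfies_and_eval_mul_le hdepOn hx0 (by linarith) hLLL (hdegV v)
  simp only [← satisfies_univ]
  simpa only [filter_filter, Fintype.card_fin] using
    half_sum_abs_card_filter_div_sub_le (card_pos.1 hsat) (· v) (pow_pos (by linarith) Δ)
      (pow_le_one₀ (by linarith) (by linarith)) fun a => by
        simpa only [filter_filter] using hmarg a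
end

section
/- Let q ≥ 1 be an integer and let η ∈ [0, 1/(2q)]. Let μ and ν be probability distributions on [q] such that TV(μ, Unif[q]) ≤ η and TV(ν, Unif[q]) ≤ η, where Unif[q] is the uniform distribution on [q]. Let Π be an optimal (maximal) coupling of μ and ν, i.e., a probability distribution on [q]×[q] with first marginal μ, second marginal ν, and Π({(a,b) : a ≠ b}) = TV(μ, ν). Then for every a ∈ [q], ∑_{b ≠ a} Π(a, b) ≤ 4·q·η·μ(a). -/
open Finset

/-- Total variation distance between two distributions on `Fin q`. -/
noncomputable def tvDist {q : ℕ} (μ ν : Fin q → ℝ) : ℝ :=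
  (1 / 2) * ∑ a, |μ a - ν a|

/-- **Coupling estimate.** Let `q ≥ 1` and `η ∈ [0, 1/(2q)]`. Let `μ` and `ν` be probability
distributions on `Fin q` that are each within total variation distance `η` of the uniform
distribution, and let `Cpl` be an optimal (maximal) coupling of `μ` and `ν`, i.e. a
probability distribution on `Fin q × Fin q` with marginals `μ` and `ν` whose disagreement
mass equals `TV(μ, ν)`. Then for every `a`, `∑_{b ≠ a} Cpl(a, b) ≤ 4·q·η·μ(a)`. -/
theorem optimal_coupling_estimate {q : ℕ} (hq : 1 ≤ q)
    (η : ℝ) (hη : η ∈ Set.Icc (0 : ℝ) (1 / (2 * q)))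
    (μ ν : Fin q → ℝ)
    (hμ0 : ∀ a, 0 ≤ μ a) (hμ1 : ∑ a, μ a = 1)
    (hν0 : ∀ a, 0 ≤ ν a) (hν1 : ∑ a, ν a = 1)
    (hμTV : tvDist μ (fun _ => 1 / q) ≤ η)
    (hνTV : tvDist ν (fun _ => 1 / q) ≤ η)
    (Cpl : Fin q → Fin q → ℝ)
    (hC0 : ∀ a b, 0 ≤ Cpl a b)
    (hC1 : ∀ a, ∑ b, Cpl a b = μ a)
    (hC2 : ∀ b, ∑ a, Cpl a b = ν b)
    (hCopt : ∑ a, ∑ b ∈ Finset.univ.erase a, Cpl a b = tvDist μ ν)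
    (a : Fin q) :
    ∑ b ∈ Finset.univ.erase a, Cpl a b ≤ 4 * q * η * μ a := by
  obtain ⟨hη0, hη1⟩ := hη
  have hq0 : (0:ℝ) < q := by exact_mod_cast hq
  -- pointwise TV bounds
  have hpt : ∀ (f : Fin q → ℝ), tvDist f (fun _ => 1 / q) ≤ η →
      ∀ c, |f c - 1 / q| ≤ 2 * η := by
    intro f hf c
    have h1 : |f c - 1 / q| ≤ ∑ b, |f b - 1 / q| :=
      Finset.single_le_sum (f := fun b => |f b - 1 / (q:ℝ)|)
        (fun b _ => abs_nonneg _) (Finset.mem_univ c)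
    have h2 : (1/2) * ∑ b, |f b - 1 / q| ≤ η := hf
    linarith
  have hμpt := hpt μ hμTV a
  have hνpt := hpt ν hνTV a
  -- row split: Cpl c c + off-diagonal = μ c
  have hrow : ∀ c, Cpl c c + ∑ b ∈ Finset.univ.erase c, Cpl c b = μ c := by
    intro c
    rw [Finset.add_sum_erase _ _ (Finset.mem_univ c), hC1]
  -- diagonal ≤ min
  have hdle : ∀ c, Cpl c c ≤ min (μ c) (ν c) := by
    intro c
    refine le_min ?_ ?_
    · rw [← hC1 c]
      exact Finset.single_le_sum (fun b _ => hC0 c b) (Finset.mem_univ c)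
    · rw [← hC2 c]
      exact Finset.single_le_sum (fun b _ => hC0 b c) (Finset.mem_univ c)
  -- sum of diagonal equals sum of min
  have hsum1 : ∑ c, Cpl c c = 1 - tvDist μ ν := by
    have := Finset.sum_congr rfl (fun c (_ : c ∈ Finset.univ) => (hrow c))
    rw [Finset.sum_add_distrib] at this
    rw [hCopt, hμ1] at this
    linarith
  have hmin : ∀ c, min (μ c) (ν c) = (μ c + ν c - |μ c - ν c|) / 2 := by
    intro c
    rcases le_total (μ c) (ν c) with h | h
    · rw [min_eq_left h, abs_of_nonpos (by linarith)]; ring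
    · rw [min_eq_right h, abs_of_nonneg (by linarith)]; ring
  have hsum2 : ∑ c, min (μ c) (ν c) = 1 - tvDist μ ν := by
    simp_rw [hmin]
    rw [← Finset.sum_div, Finset.sum_sub_distrib, Finset.sum_add_distrib,
      hμ1, hν1, tvDist]
    ring
  -- pointwise equality on diagonal
  have hdiag : ∀ c, Cpl c c = min (μ c) (ν c) := by
    have hsums : ∑ c, Cpl c c = ∑ c, min (μ c) (ν c) := by rw [hsum1, hsum2]
    intro c
    by_contra hne
    have hlt : Cpl c c < min (μ c) (ν c) := lt_of_le_of_ne (hdle c) hne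
    have : ∑ c, Cpl c c < ∑ c, min (μ c) (ν c) :=
      Finset.sum_lt_sum (fun b _ => hdle b) ⟨c, Finset.mem_univ c, hlt⟩
    linarith
  -- conclude
  have key : ∑ b ∈ Finset.univ.erase a, Cpl a b = μ a - min (μ a) (ν a) := by
    have := hrow a
    rw [hdiag a] at this
    linarith
  rw [key]
  have hμa0 := hμ0 a
  have hνa0 := hν0 a
  rcases le_total (μ a) (ν a) with h | h
  · rw [min_eq_left h]
    have : 0 ≤ 4 * q * η * μ a := by positivity
    linarith
  · rw [min_eq_right h]
    rcases le_total (4 * q * η) 1 with h4 | h4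
    · -- small η case: μ a ≥ 1/q - 2η, etc.
      have h1 : μ a - 1/q ≤ 2 * η := by
        have := abs_le.mp hμpt; linarith [this.2]
      have h2 : 1/q - ν a ≤ 2 * η := by
        have := abs_le.mp hνpt; linarith [this.1]
      have hμlow : 1/q - 2*η ≤ μ a := by
        have := abs_le.mp hμpt; linarith [this.1]
      -- goal: μ a - ν a ≤ 4 q η μ a
      have hq1 : (1:ℝ)/q * q = 1 := by field_simp
      nlinarith [mul_nonneg hη0 hq0.le, sq_nonneg η]
    · nlinarith
end
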